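/- Let (A,≺,≻) be a Leibniz dendriform algebra over a field K and let α: A→A be a morphism of (A,≺,≻), i.e. a linear map with α(x≺y) = α(x)≺α(y) and α(x≻y) = α(x)≻α(y) for all x,y. Define x ≺_α y = α(x≺y) and x ≻_α y = α(x≻y). Then (A,≺_α,≻_α,α) is a Hom-Leibniz dendriform algebra. Moreover, if (A',≺',≻') is another Leibniz dendriform algebra, α': A'→A' is a morphism of (A',≺',≻'), and f: A→A' is a linear map satisfying f(x≺y) = f(x)≺'f(y), f(x≻y) = f(x)≻'f(y) and f∘α = α'∘f, then f(x ≺_α y) = f(x) ≺'_{α'} f(y) and f(x ≻_α y) = f(x) ≻'_{α'} f(y) for all x,y ∈ A, i.e. f is a morphism of Hom-Leibniz dendriform algebras from (A,≺_α,≻_α,α) to (A',≺'_{α'},≻'_{α'},α'). -/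
import Mathlib


/-- A Hom-Leibniz dendriform algebra `(A, ≺, ≻, α)`, with `p = ≺` and `s = ≻`
and `[x,y] = x≺y + x≻y`. -/
def HomLeibnizDendriform {K A : Type*} [Field K] [AddCommGroup A] [Module K A]
    (p s : A →ₗ[K] A →ₗ[K] A) (α : A →ₗ[K] A) : Prop :=
  (∀ x y z : A, s (p x y + s x y) (α z) = s (α x) (s y z) - s (α y) (s x z)) ∧
  (∀ x y z : A, s (α x) (p y z) = p (s x y) (α z) + p (α y) (p x z + s x z)) ∧
  (∀ x y z : A, p (α x) (p y z + s y z) = p (p x y) (α z) + s (α y) (p x z))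

/-- A Leibniz dendriform algebra `(A, ≺, ≻)` (the case `α = id`). -/
def LeibnizDendriform {K A : Type*} [Field K] [AddCommGroup A] [Module K A]
    (p s : A →ₗ[K] A →ₗ[K] A) : Prop :=
  (∀ x y z : A, s (p x y + s x y) z = s x (s y z) - s y (s x z)) ∧
  (∀ x y z : A, s x (p y z) = p (s x y) z + p y (p x z + s x z)) ∧
  (∀ x y z : A, p x (p y z + s y z) = p (p x y) z + s y (p x z))

/-- Yau twist: a Leibniz dendriform algebra together with an
endomorphism `α` yields a Hom-Leibniz dendriform algebra with operations
`x ≺_α y = α(x≺y)` and `x ≻_α y = α(x≻y)`; moreover morphisms of Leibniz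
dendriform algebras compatible with the twisting maps are morphisms of the
twisted Hom-Leibniz dendriform algebras. -/
theorem yauTwist_leibnizDendriform
    {K A A' : Type*} [Field K] [AddCommGroup A] [Module K A]
    [AddCommGroup A'] [Module K A']
    (p s : A →ₗ[K] A →ₗ[K] A)
    (hA : LeibnizDendriform p s)
    (α : A →ₗ[K] A)
    (hαp : ∀ x y : A, α (p x y) = p (α x) (α y))
    (hαs : ∀ x y : A, α (s x y) = s (α x) (α y))
    (p' s' : A' →ₗ[K] A' →ₗ[K] A')
    (hA' : LeibnizDendriform p' s')
    (α' : A' →ₗ[K] A')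
    (hα'p : ∀ x y : A', α' (p' x y) = p' (α' x) (α' y))
    (hα's : ∀ x y : A', α' (s' x y) = s' (α' x) (α' y))
    (f : A →ₗ[K] A')
    (hfp : ∀ x y : A, f (p x y) = p' (f x) (f y))
    (hfs : ∀ x y : A, f (s x y) = s' (f x) (f y))
    (hfα : ∀ x : A, f (α x) = α' (f x)) :
    HomLeibnizDendriform (p.compr₂ α) (s.compr₂ α) α ∧
    (∀ x y : A, f (p.compr₂ α x y) = p'.compr₂ α' (f x) (f y)) ∧
    (∀ x y : A, f (s.compr₂ α x y) = s'.compr₂ α' (f x) (f y)) := by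
  obtain ⟨h1, h2, h3⟩ := hA
  refine ⟨⟨fun x y z => ?_, fun x y z => ?_, fun x y z => ?_⟩,
    fun x y => ?_, fun x y => ?_⟩
  · simp only [LinearMap.compr₂_apply, ← hαs, ← hαp, ← map_add, ← map_sub]
    rw [h1]
  · simp only [LinearMap.compr₂_apply, ← hαs, ← hαp, ← map_add]
    rw [h2]
  · simp only [LinearMap.compr₂_apply, ← hαs, ← hαp, ← map_add]
    rw [h3]
  · simp only [LinearMap.compr₂_apply, hfp, hfα, hα'p]
  · simp only [LinearMap.compr₂_apply, hfs, hfα, hα's]
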